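/- For positive integers n and k, the set { x in the algebraic closure of GF(2) : T_k(x) ∈ GF(2^n) } equals the image of GF(2^{2L}) under the map x ↦ T_n^L(T_k^L(T_2(x))), where L = lcm(n, k). In particular this set is contained in GF(2^{2L}). -/

import Mathlib

/-!
Write `φ` for the Frobenius `x ↦ x ^ 2`, so that `T l M = ∑_{i < M/l} φ^(l i)` and every map in
sight is an additive polynomial in `φ`; in particular they all commute. The telescoping identity
`(φ^m + 1) ∘ T m M = φ^M + 1` (for `m ∣ M`) gives, with `f = T_n^L ∘ T_k^L ∘ T_2`,
`(φ^n + 1) ∘ T_k ∘ f = (φ^n + 1) ∘ T_n^L ∘ T_L ∘ T_2 = (φ^L + 1) ∘ (φ^L + 1) = φ^(2L) + 1`.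
Hence `T_k (f y) ∈ GF(2^n)` iff `y ∈ GF(2^(2L))`; since `f` is a nonconstant additive
polynomial over an algebraically closed field it is surjective, and since it commutes with `φ`
it maps `GF(2^(2L))` into itself.
-/

/-- `T l k x = ∑_{i=0}^{k/l - 1} x^(2^(l*i))`, the linearized trace-like polynomial. -/
noncomputable def T {F : Type*} [Field F] (l k : ℕ) (x : F) : F :=
  ∑ i ∈ Finset.range (k / l), x ^ (2 ^ (l * i))

open Finset Polynomial

section Field

variable {F : Type*} [Field F]

theorem T_eq_sum {l : ℕ} (hl : 0 < l) (q : ℕ) (x : F) :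
    T l (l * q) x = ∑ i ∈ range q, x ^ 2 ^ (l * i) := by
  rw [T, Nat.mul_div_cancel_left q hl]

theorem T_one (M : ℕ) (x : F) : T 1 M x = ∑ i ∈ range M, x ^ 2 ^ i := by
  simp [T]

theorem T_one_two (x : F) : T 1 2 x = x + x ^ 2 := by
  simp [T, sum_range_succ]

theorem T_surjective [IsAlgClosed F] {m M : ℕ} (hmM : 0 < M / m) :
    Function.Surjective (T m M : F → F) := by
  have hm : 0 < m := Nat.pos_of_ne_zero fun h => by simp [h] at hmM
  set p : F[X] := ∑ i ∈ range (M / m), X ^ 2 ^ (m * i)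
  have hp : p.eval = T m M := funext fun x => by simp [p, T, eval_finsetSum]
  have hdeg : p.natDegree ≠ 0 := by
    have hinj : Function.Injective fun i : ℕ => 2 ^ (m * i) := fun i j h =>
      Nat.eq_of_mul_eq_mul_left hm (Nat.pow_right_injective le_rfl h)
    rw [natDegree_sum_eq_of_disjoint]
    · refine Nat.pos_iff_ne_zero.mp (lt_of_lt_of_le ?_ (le_sup (mem_range.mpr hmM)))
      simp
    · intro i _ j _ hij
      simpa using hinj.ne hij
  exact hp ▸ IsAlgClosed.eval_surjective hdeg

section CharTwo

variable [CharP F 2]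

theorem T_pow_two_pow (l M e : ℕ) (x : F) : T l M x ^ 2 ^ e = T l M (x ^ 2 ^ e) := by
  simp only [T, sum_pow_char_pow]
  exact sum_congr rfl fun i _ => pow_right_comm x _ _

theorem T_add (l M : ℕ) (x y : F) : T l M (x + y) = T l M x + T l M y := by
  simp only [T, add_pow_char_pow, sum_add_distrib]

theorem T_sum (l M : ℕ) {ι : Type*} (s : Finset ι) (f : ι → F) :
    T l M (∑ i ∈ s, f i) = ∑ i ∈ s, T l M (f i) := by
  simp only [T, sum_pow_char_pow]
  exact sum_comm

theorem T_comm (a b c d : ℕ) (x : F) : T a b (T c d x) = T c d (T a b x) := by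
  have h := T_sum a b (range (d / c)) fun j => x ^ 2 ^ (c * j)
  simp only [← T_pow_two_pow] at h
  exact h

theorem T_pow_two_pow_add_self {m M : ℕ} (hm : 0 < m) (hmM : m ∣ M) (w : F) :
    T m M w ^ 2 ^ m + T m M w = w ^ 2 ^ M + w := by
  obtain ⟨q, rfl⟩ := hmM
  calc T m (m * q) w ^ 2 ^ m + T m (m * q) w
      = ∑ i ∈ range q, (w ^ 2 ^ (m * (i + 1)) - w ^ 2 ^ (m * i)) := by
        rw [T_eq_sum hm, sum_pow_char_pow, sum_sub_distrib, CharTwo.sub_eq_add]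
        congr 1
        refine sum_congr rfl fun i _ => ?_
        rw [← pow_mul, ← pow_add, mul_add, mul_one]
    _ = w ^ 2 ^ (m * q) + w := by
        rw [sum_range_sub fun i => w ^ 2 ^ (m * i), CharTwo.sub_eq_add]
        simp

theorem T_one_T {k L : ℕ} (hk : 0 < k) (hkL : k ∣ L) (z : F) : T 1 k (T k L z) = T 1 L z := by
  obtain ⟨q, rfl⟩ := hkL
  induction q with
  | zero => simp [T]
  | succ q ih =>
    have hsplit : T 1 (k * (q + 1)) z = T 1 (k * q) z + T 1 k z ^ 2 ^ (k * q) := by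
      rw [T_pow_two_pow, T_one, T_one, T_one, mul_add, mul_one, sum_range_add]
      congr 1
      refine sum_congr rfl fun i _ => ?_
      rw [← pow_mul, ← pow_add, add_comm]
    rw [T_eq_sum hk, sum_range_succ, T_add, ← T_eq_sum hk, ih, hsplit, T_pow_two_pow]

theorem T_one_T_one_two (L : ℕ) (y : F) : T 1 L (T 1 2 y) = y ^ 2 ^ L + y := by
  have h := T_pow_two_pow_add_self one_pos (one_dvd L) y
  rw [T_one_two, T_add, ← pow_one 2, ← T_pow_two_pow, add_comm]
  exact h

theorem T_one_T_T_T_one_two_pow_add_self {n k L : ℕ} (hn : 0 < n) (hk : 0 < k)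
    (hnL : n ∣ L) (hkL : k ∣ L) (y : F) :
    T 1 k (T n L (T k L (T 1 2 y))) ^ 2 ^ n + T 1 k (T n L (T k L (T 1 2 y)))
      = y ^ 2 ^ (2 * L) + y := by
  rw [T_comm 1 k n L, T_one_T hk hkL, T_one_T_one_two, T_pow_two_pow_add_self hn hnL,
    add_pow_char_pow, ← pow_mul, ← pow_add, ← two_mul]
  linear_combination y ^ 2 ^ L * CharTwo.two_eq_zero (R := F)

end CharTwo

end Field

theorem stmt_9 (n k : ℕ) (hn : 0 < n) (hk : 0 < k) :
    {x : AlgebraicClosure (ZMod 2) | (T 1 k x) ^ (2 ^ n) = T 1 k x} =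
      (fun x : AlgebraicClosure (ZMod 2) =>
          T n (Nat.lcm n k) (T k (Nat.lcm n k) (x + x ^ 2))) ''
        {x : AlgebraicClosure (ZMod 2) | x ^ (2 ^ (2 * Nat.lcm n k)) = x} ∧
    {x : AlgebraicClosure (ZMod 2) | (T 1 k x) ^ (2 ^ n) = T 1 k x} ⊆
      {x : AlgebraicClosure (ZMod 2) | x ^ (2 ^ (2 * Nat.lcm n k)) = x} := by
  set L := Nat.lcm n k
  have hL : 0 < L := Nat.lcm_pos hn hk
  have hnL : n ∣ L := Nat.dvd_lcm_left n k
  have hkL : k ∣ L := Nat.dvd_lcm_right n k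
  have hf : (fun x : AlgebraicClosure (ZMod 2) => T n L (T k L (x + x ^ 2)))
      = T n L ∘ T k L ∘ T 1 2 := funext fun x => by simp [T_one_two]
  rw [hf]
  set f : AlgebraicClosure (ZMod 2) → AlgebraicClosure (ZMod 2) := T n L ∘ T k L ∘ T 1 2
  have hsurj : Function.Surjective f :=
    .comp (T_surjective (Nat.div_pos (Nat.le_of_dvd hL hnL) hn))
      (.comp (T_surjective (Nat.div_pos (Nat.le_of_dvd hL hkL) hk)) (T_surjective (by norm_num)))
  have hpre : f ⁻¹' {x | T 1 k x ^ 2 ^ n = T 1 k x} = {y | y ^ 2 ^ (2 * L) = y} := by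
    ext y
    simp only [Set.mem_preimage, Set.mem_ofPred_eq, f, Function.comp_apply]
    rw [← CharTwo.add_eq_zero, T_one_T_T_T_one_two_pow_add_self hn hk hnL hkL, CharTwo.add_eq_zero]
  have himage := hsurj.image_preimage {x | T 1 k x ^ 2 ^ n = T 1 k x}
  rw [hpre] at himage
  refine ⟨himage.symm, ?_⟩
  rw [← himage]
  rintro _ ⟨y, hy, rfl⟩
  simp only [Set.mem_ofPred_eq, f, Function.comp_apply, T_pow_two_pow] at hy ⊢
  rw [hy]
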